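/- arXiv:1802.02098 — 9 statements merged into one kernel-verified Lean document; each statement's English description precedes it below -/
import Mathlib

section
/- Let K be a real symmetric positive definite matrix given in block form K = fromBlocks K_ii K_ib K_bi K_bb (interior indices i, boundary indices b, with K_bi = K_ibᵀ), and let Q be a symmetric positive semidefinite matrix on the boundary indices. Let t denote the restriction to the boundary block, so that tᵀQt = fromBlocks 0 0 0 Q. Then K + tᵀQt is invertible, the tangent Schur complement S := K_bb − K_bi · K_ii⁻¹ · K_ib satisfies that S + Q is invertible, and the boundary block of the inverse satisfies t (K + tᵀQt)⁻¹ tᵀ = (S + Q)⁻¹. -/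
/-!
Adding `fromBlocks 0 0 0 Q` to `K` only changes its boundary block, and the Schur complement of
`K + tᵀQt` with respect to the interior block is `S + Q`. Since `K` is positive definite and `Q`
positive semidefinite, `K + tᵀQt` and its interior block `K_ii` are positive definite, hence
invertible; block Gaussian elimination then shows that `S + Q` is invertible and that its inverse
is the boundary block of `(K + tᵀQt)⁻¹`.
-/

open Matrix

namespace Matrix

section SchurComplement

variable {m n α : Type*} [Fintype m] [Fintype n] [DecidableEq m] [DecidableEq n] [CommRing α]
  {A : Matrix m m α} {B : Matrix m n α} {C : Matrix n m α} {D : Matrix n n α}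

theorem isUnit_schur₁₁_of_isUnit_fromBlocks (hA : IsUnit A) (h : IsUnit (fromBlocks A B C D)) :
    IsUnit (D - C * A⁻¹ * B) := by
  let := hA.invertible
  rwa [← invOf_eq_nonsing_inv, ← isUnit_fromBlocks_iff_of_invertible₁₁]

theorem toBlocks₂₂_inv_fromBlocks_of_isUnit (hA : IsUnit A) (h : IsUnit (fromBlocks A B C D)) :
    (fromBlocks A B C D)⁻¹.toBlocks₂₂ = (D - C * A⁻¹ * B)⁻¹ := by
  let := hA.invertible
  let := h.invertible
  let := invertibleOfFromBlocks₁₁Invertible A B C D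
  rw [← invOf_eq_nonsing_inv, invOf_fromBlocks₁₁_eq, toBlocks_fromBlocks₂₂, invOf_eq_nonsing_inv,
    invOf_eq_nonsing_inv]

end SchurComplement

section Positivity

variable {m n R : Type*} [CommRing R] [PartialOrder R] [StarRing R]

theorem PosDef.toBlocks₁₁ [Fintype m] {M : Matrix (m ⊕ n) (m ⊕ n) R} (h : M.PosDef) :
    M.toBlocks₁₁.PosDef :=
  h.submatrix Sum.inl_injective

theorem PosSemidef.fromBlocks_zero [Fintype m] [Fintype n] {Q : Matrix n n R}
    (hQ : Q.PosSemidef) : (fromBlocks (0 : Matrix m m R) 0 0 Q).PosSemidef := by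
  refine .of_dotProduct_mulVec_nonneg (isHermitian_zero.fromBlocks (by simp) hQ.isHermitian)
    fun x ↦ ?_
  obtain ⟨y, z, rfl⟩ : ∃ y z, x = Sum.elim y z := ⟨_, _, (Sum.elim_comp_inl_inr x).symm⟩
  simpa [fromBlocks_mulVec, Function.star_sumElim] using hQ.dotProduct_mulVec_nonneg z

end Positivity

end Matrix

theorem stmt_0_general {ι β : Type*} [Fintype ι] [Fintype β] [DecidableEq ι] [DecidableEq β]
    (Kii : Matrix ι ι ℝ) (Kib : Matrix ι β ℝ) (Kbi : Matrix β ι ℝ) (Kbb : Matrix β β ℝ)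
    (Q : Matrix β β ℝ)
    (hK : (fromBlocks Kii Kib Kbi Kbb).PosDef)
    (hQ : Q.PosSemidef) :
    IsUnit (fromBlocks Kii Kib Kbi Kbb + fromBlocks 0 0 0 Q) ∧
    IsUnit (Kbb - Kbi * Kii⁻¹ * Kib + Q) ∧
    ((fromBlocks Kii Kib Kbi Kbb + fromBlocks 0 0 0 Q)⁻¹).toBlocks₂₂
      = (Kbb - Kbi * Kii⁻¹ * Kib + Q)⁻¹ := by
  have hunit : IsUnit (fromBlocks Kii Kib Kbi Kbb + fromBlocks 0 0 0 Q) :=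
    (hK.add_posSemidef hQ.fromBlocks_zero).isUnit
  have hKii : IsUnit Kii := hK.toBlocks₁₁.isUnit
  have hsum : fromBlocks Kii Kib Kbi Kbb + fromBlocks 0 0 0 Q
      = fromBlocks Kii Kib Kbi (Kbb + Q) := by
    simp [fromBlocks_add]
  have hschur : Kbb - Kbi * Kii⁻¹ * Kib + Q = Kbb + Q - Kbi * Kii⁻¹ * Kib := by abel
  rw [hsum] at hunit ⊢
  rw [hschur]
  exact ⟨hunit, isUnit_schur₁₁_of_isUnit_fromBlocks hKii hunit,
    toBlocks₂₂_inv_fromBlocks_of_isUnit hKii hunit⟩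

/-- For a real symmetric positive definite block matrix
`K = fromBlocks K_ii K_ib K_bi K_bb` and a symmetric positive semidefinite boundary
matrix `Q`, the matrix `K + tᵀQt` (with `tᵀQt = fromBlocks 0 0 0 Q`) is invertible,
the Schur complement plus impedance `S + Q` is invertible, and
`t (K + tᵀQt)⁻¹ tᵀ = (S + Q)⁻¹`. -/
theorem stmt_0 {ι β : Type*} [Fintype ι] [Fintype β] [DecidableEq ι] [DecidableEq β]
    (Kii : Matrix ι ι ℝ) (Kib : Matrix ι β ℝ) (Kbi : Matrix β ι ℝ) (Kbb : Matrix β β ℝ)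
    (Q : Matrix β β ℝ)
    (hKbi : Kbi = Kibᵀ)
    (hK : (fromBlocks Kii Kib Kbi Kbb).PosDef)
    (hQsym : Qᵀ = Q)
    (hQ : Q.PosSemidef) :
    IsUnit (fromBlocks Kii Kib Kbi Kbb + fromBlocks 0 0 0 Q) ∧
    IsUnit (Kbb - Kbi * Kii⁻¹ * Kib + Q) ∧
    ((fromBlocks Kii Kib Kbi Kbb + fromBlocks 0 0 0 Q)⁻¹).toBlocks₂₂
      = (Kbb - Kbi * Kii⁻¹ * Kib + Q)⁻¹ :=
  stmt_0_general Kii Kib Kbi Kbb Q hK hQ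
end

section
/- Let K be a real symmetric positive definite matrix given in block form K = fromBlocks K_ii K_ib K_bi K_bb (with K_bi = K_ibᵀ), let Q be a symmetric positive semidefinite matrix on the boundary indices, let S := K_bb − K_bi · K_ii⁻¹ · K_ib, and let t denote restriction to the boundary block. Then for every vector f with interior part f_i and boundary part f_b, one has (S + Q) · (t (K + tᵀQt)⁻¹ f) = f_b − K_bi · K_ii⁻¹ · f_i; that is, the primal condensed right-hand side b_p := f_b − K_bi K_ii⁻¹ f_i and the mixed condensed right-hand side b_m := t (K + tᵀQt)⁻¹ f are related by b_p = (S + Q) b_m. -/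
/-!
Put `g := (K + tᵀQt)⁻¹ f`; the perturbed matrix is positive definite, hence invertible. Its
block rows read `K_ii g_i + K_ib g_b = f_i` and `K_bi g_i + (K_bb + Q) g_b = f_b`. The principal
block `K_ii` of `K` is positive definite too, so the first row can be solved for
`g_i = K_ii⁻¹ (f_i - K_ib g_b)`, and substituting into the second gives
`(S + Q) g_b = f_b - K_bi K_ii⁻¹ f_i`.
-/

open Matrix

namespace Matrix

variable {m n R : Type*}

-- `fromCols 0 1` is the boundary trace `t`.
theorem fromBlocks_zero_zero_zero_eq [Fintype n] [DecidableEq n] [Semiring R] [StarRing R]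
    (Q : Matrix n n R) :
    fromBlocks (0 : Matrix m m R) 0 0 Q
      = (fromCols (0 : Matrix n m R) 1)ᴴ * Q * fromCols (0 : Matrix n m R) 1 := by
  rw [conjTranspose_fromCols_eq_fromRows_conjTranspose, fromRows_mul, mul_fromCols]
  ext (i | i) (j | j) <;> simp

theorem PosSemidef.fromBlocks_zero_zero_zero [Finite m] [Fintype n] [DecidableEq n] [Ring R]
    [PartialOrder R] [StarRing R] {Q : Matrix n n R} (hQ : Q.PosSemidef) :
    (fromBlocks (0 : Matrix m m R) 0 0 Q).PosSemidef := by
  have := Fintype.ofFinite m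
  rw [fromBlocks_zero_zero_zero_eq]
  exact hQ.conjTranspose_mul_mul_same _

theorem PosDef.of_fromBlocks₁₁ [Ring R] [PartialOrder R] [StarRing R] {A : Matrix m m R}
    {B : Matrix m n R} {C : Matrix n m R} {D : Matrix n n R} (h : (fromBlocks A B C D).PosDef) :
    A.PosDef :=
  h.submatrix Sum.inl_injective

theorem schur_mulVec_inr_of_fromBlocks_mulVec_eq [Fintype m] [Fintype n] [DecidableEq m]
    [CommRing R] {A : Matrix m m R} {B : Matrix m n R} {C : Matrix n m R} {D : Matrix n n R}
    {g f : m ⊕ n → R} (hA : IsUnit A.det) (h : fromBlocks A B C D *ᵥ g = f) :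
    (D - C * A⁻¹ * B) *ᵥ (g ∘ Sum.inr) = f ∘ Sum.inr - C *ᵥ A⁻¹ *ᵥ (f ∘ Sum.inl) := by
  have hcancel (v : m → R) : A⁻¹ *ᵥ A *ᵥ v = v := by
    rw [mulVec_mulVec, nonsing_inv_mul _ hA, one_mulVec]
  rw [← h, fromBlocks_mulVec]
  simp only [Sum.elim_comp_inl, Sum.elim_comp_inr, mulVec_add, hcancel, sub_mulVec, ← mulVec_mulVec]
  abel

end Matrix

theorem stmt_1_general {ι β : Type*} [Fintype ι] [Fintype β] [DecidableEq ι] [DecidableEq β]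
    (Kii : Matrix ι ι ℝ) (Kib : Matrix ι β ℝ) (Kbi : Matrix β ι ℝ) (Kbb : Matrix β β ℝ)
    (Q : Matrix β β ℝ)
    (hK : (fromBlocks Kii Kib Kbi Kbb).PosDef)
    (hQ : Q.PosSemidef)
    (f : ι ⊕ β → ℝ) :
    (Kbb - Kbi * Kii⁻¹ * Kib + Q) *ᵥ
        (fun x => (((fromBlocks Kii Kib Kbi Kbb + fromBlocks 0 0 0 Q)⁻¹) *ᵥ f) (Sum.inr x))
      = (fun x => f (Sum.inr x)) - Kbi *ᵥ (Kii⁻¹ *ᵥ fun x => f (Sum.inl x)) := by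
  have hM := hK.add_posSemidef hQ.fromBlocks_zero_zero_zero
  have hMblocks : fromBlocks Kii Kib Kbi Kbb + fromBlocks 0 0 0 Q
      = fromBlocks Kii Kib Kbi (Kbb + Q) := by
    simp only [fromBlocks_add, add_zero]
  have hMg : fromBlocks Kii Kib Kbi (Kbb + Q) *ᵥ
      ((fromBlocks Kii Kib Kbi Kbb + fromBlocks 0 0 0 Q)⁻¹ *ᵥ f) = f := by
    rw [mulVec_mulVec, ← hMblocks, mul_nonsing_inv _ hM.det_pos.ne'.isUnit, one_mulVec]
  rw [sub_add_eq_add_sub]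
  exact schur_mulVec_inr_of_fromBlocks_mulVec_eq hK.of_fromBlocks₁₁.det_pos.ne'.isUnit hMg

/-- For a real symmetric positive definite block matrix `K` and a symmetric
positive semidefinite boundary impedance `Q`, the primal condensed right-hand side
`b_p = f_b − K_bi K_ii⁻¹ f_i` and the mixed condensed right-hand side
`b_m = t (K + tᵀQt)⁻¹ f` satisfy `b_p = (S + Q) b_m`, where
`S = K_bb − K_bi K_ii⁻¹ K_ib`. -/
theorem stmt_1 {ι β : Type*} [Fintype ι] [Fintype β] [DecidableEq ι] [DecidableEq β]
    (Kii : Matrix ι ι ℝ) (Kib : Matrix ι β ℝ) (Kbi : Matrix β ι ℝ) (Kbb : Matrix β β ℝ)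
    (Q : Matrix β β ℝ)
    (hKbi : Kbi = Kibᵀ)
    (hK : (fromBlocks Kii Kib Kbi Kbb).PosDef)
    (hQsym : Qᵀ = Q)
    (hQ : Q.PosSemidef)
    (f : ι ⊕ β → ℝ) :
    (Kbb - Kbi * Kii⁻¹ * Kib + Q) *ᵥ
        (fun x => (((fromBlocks Kii Kib Kbi Kbb + fromBlocks 0 0 0 Q)⁻¹) *ᵥ f) (Sum.inr x))
      = (fun x => f (Sum.inr x)) - Kbi *ᵥ (Kii⁻¹ *ᵥ fun x => f (Sum.inl x)) :=
  stmt_1_general Kii Kib Kbi Kbb Q hK hQ f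
end

section
/- Let Q be an n×n real symmetric positive definite matrix, let A be an m×n real matrix of full row rank (A is surjective), and let B be a p×n real matrix whose row space satisfies Range(Bᵀ) = Ker(A). Then ℝⁿ is the internal direct sum of the subspace Ker(B) of continuous fields and the subspace Ker(A·Q) of balanced fields: every x ∈ ℝⁿ can be written in a unique way as x = x_c + x_e with B x_c = 0 and A Q x_e = 0. -/
open Matrix

/-!
A continuous field lies in `Ker B = (Range Bᵀ)ᗮ = (Ker A)ᗮ`, while a balanced field `x` has
`Q x ∈ Ker A = Range Bᵀ`; so a field that is both is `Q`-orthogonal to itself and vanishes.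
For existence, `A Q Aᵀ` is positive definite because `Aᵀ` is injective, so for every `x` there
is `y` with `A Q Aᵀ y = A Q x`: then `Aᵀ y` is continuous and `x - Aᵀ y` is balanced.
-/

theorem Submodule.existsUnique_prod_mem_add_eq_of_isCompl {R E : Type*} [Ring R]
    [AddCommGroup E] [Module R E] {P P' : Submodule R E} (h : IsCompl P P') (x : E) :
    ∃! u : E × E, u.1 ∈ P ∧ u.2 ∈ P' ∧ x = u.1 + u.2 := by
  obtain ⟨⟨u, v⟩, huv, huniq⟩ := Submodule.existsUnique_add_of_isCompl_prod h x
  refine ⟨(u, v), ⟨u.2, v.2, huv.symm⟩, ?_⟩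
  rintro ⟨a, b⟩ ⟨ha, hb, rfl⟩
  have := huniq (⟨a, ha⟩, ⟨b, hb⟩) rfl
  simp only [Prod.ext_iff, Subtype.ext_iff] at this
  exact Prod.ext this.1 this.2

namespace Matrix

variable {m n p : Type*} [Fintype n] [Fintype p]

theorem vecMul_injective_of_mulVec_surjective [Fintype m] {R : Type*} [CommRing R]
    {A : Matrix m n R} (hA : Function.Surjective A.mulVec) : Function.Injective A.vecMul := by
  refine (injective_iff_map_eq_zero A.vecMulLinear).2 fun y hy => ?_
  refine dotProduct_eq_zero y fun w => ?_
  obtain ⟨z, rfl⟩ := hA w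
  rw [dotProduct_mulVec]
  simp [show y ᵥ* A = 0 from hy]

theorem range_mulVecLin_transpose_le_ker_comm [Fintype m] {R : Type*} [CommRing R]
    {A : Matrix m n R} {B : Matrix p n R}
    (h : LinearMap.range Bᵀ.mulVecLin ≤ LinearMap.ker A.mulVecLin) :
    LinearMap.range Aᵀ.mulVecLin ≤ LinearMap.ker B.mulVecLin := by
  classical
  rw [LinearMap.range_le_ker_iff, ← mulVecLin_mul, ← toLin'_apply',
    LinearEquiv.map_eq_zero_iff] at h ⊢
  rw [← transpose_transpose B, ← transpose_mul, h, transpose_zero]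

theorem disjoint_ker_mulVecLin_of_posDef {Q : Matrix n n ℝ} (hQ : Q.PosDef) {A : Matrix m n ℝ}
    {B : Matrix p n ℝ} (h : LinearMap.ker A.mulVecLin ≤ LinearMap.range Bᵀ.mulVecLin) :
    Disjoint (LinearMap.ker B.mulVecLin) (LinearMap.ker (A * Q).mulVecLin) := by
  refine Submodule.disjoint_def.2 fun d hBd hAQd => ?_
  by_contra hd
  obtain ⟨v, hv⟩ : Q *ᵥ d ∈ LinearMap.range Bᵀ.mulVecLin :=
    h (by simpa [mulVec_mulVec] using hAQd)
  have hself : d ⬝ᵥ Q *ᵥ d = 0 := by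
    rw [← hv, mulVecLin_apply, dotProduct_mulVec, vecMul_transpose,
      show B *ᵥ d = 0 from hBd, zero_dotProduct]
  simpa [hself] using hQ.dotProduct_mulVec_pos hd

theorem codisjoint_range_transpose_ker_mul_of_posDef [Fintype m] {Q : Matrix n n ℝ}
    (hQ : Q.PosDef) {A : Matrix m n ℝ} (hA : Function.Surjective A.mulVec) :
    Codisjoint (LinearMap.range Aᵀ.mulVecLin) (LinearMap.ker (A * Q).mulVecLin) := by
  classical
  have hM : (A * Q * Aᵀ).PosDef := by
    simpa using hQ.mul_mul_conjTranspose_same (vecMul_injective_of_mulVec_surjective hA)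
  refine Submodule.codisjoint_iff_exists_add_eq.2 fun x => ?_
  obtain ⟨y, hy⟩ := mulVec_surjective_iff_isUnit.2 hM.isUnit ((A * Q) *ᵥ x)
  refine ⟨Aᵀ *ᵥ y, x - Aᵀ *ᵥ y, ⟨y, rfl⟩, ?_, add_sub_cancel _ _⟩
  rw [LinearMap.mem_ker, mulVecLin_apply, mulVec_sub, mulVec_mulVec, ← hy, sub_self]

theorem isCompl_ker_mulVecLin_of_posDef [Fintype m] {Q : Matrix n n ℝ} (hQ : Q.PosDef)
    {A : Matrix m n ℝ} {B : Matrix p n ℝ} (hA : Function.Surjective A.mulVec)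
    (hB : LinearMap.range Bᵀ.mulVecLin = LinearMap.ker A.mulVecLin) :
    IsCompl (LinearMap.ker B.mulVecLin) (LinearMap.ker (A * Q).mulVecLin) :=
  ⟨disjoint_ker_mulVecLin_of_posDef hQ hB.ge,
    (codisjoint_range_transpose_ker_mul_of_posDef hQ hA).mono_left
      (range_mulVecLin_transpose_le_ker_comm hB.le)⟩

end Matrix

theorem stmt_3_general {n m p : Type*} [Fintype n] [Fintype m] [Fintype p]
    (Q : Matrix n n ℝ) (A : Matrix m n ℝ) (B : Matrix p n ℝ)
    (hQ : Q.PosDef)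
    (hA : Function.Surjective A.mulVec)
    (hB : LinearMap.range Bᵀ.mulVecLin = LinearMap.ker A.mulVecLin) :
    ∀ x : n → ℝ, ∃! pair : (n → ℝ) × (n → ℝ),
      B *ᵥ pair.1 = 0 ∧ (A * Q) *ᵥ pair.2 = 0 ∧ x = pair.1 + pair.2 :=
  Submodule.existsUnique_prod_mem_add_eq_of_isCompl (isCompl_ker_mulVecLin_of_posDef hQ hA hB)

/-- If `Q` is symmetric positive definite, `A` has full row rank
(surjective), and `Range(Bᵀ) = Ker(A)`, then every vector `x` splits in a unique
way as `x = x_c + x_e` with `B x_c = 0` (continuous) and `A Q x_e = 0` (balanced). -/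
theorem stmt_3 {n m p : Type*} [Fintype n] [Fintype m] [Fintype p]
    [DecidableEq n] [DecidableEq m] [DecidableEq p]
    (Q : Matrix n n ℝ) (A : Matrix m n ℝ) (B : Matrix p n ℝ)
    (hQsym : Qᵀ = Q) (hQ : Q.PosDef)
    (hA : Function.Surjective A.mulVec)
    (hB : LinearMap.range Bᵀ.mulVecLin = LinearMap.ker A.mulVecLin) :
    ∀ x : n → ℝ, ∃! pair : (n → ℝ) × (n → ℝ),
      B *ᵥ pair.1 = 0 ∧ (A * Q) *ᵥ pair.2 = 0 ∧ x = pair.1 + pair.2 :=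
  stmt_3_general Q A B hQ hA hB
end

section
/- Let Q be an n×n real symmetric positive definite matrix, let A be an m×n real matrix of full row rank (A is surjective), and let B be a p×n real matrix of full row rank with Range(Bᵀ) = Ker(A). Then for every μ ∈ ℝⁿ there exists a unique pair (f_B, v_A) ∈ ℝᵖ × ℝᵐ such that μ = Bᵀ f_B + Q Aᵀ v_A. -/
/-!
Applying `A` kills the `Bᵀ f_B` term, since `Range(Bᵀ) = Ker(A)`, and turns `Q Aᵀ v_A` into
`A Q Aᵀ v_A`. The Schur complement `A Q Aᵀ` is positive definite because `Aᵀ` is injective, so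
`v_A` is determined by `A μ`; the remainder `μ - Q Aᵀ v_A` lies in `Ker(A) = Range(Bᵀ)`, and
`f_B` is then unique because `Bᵀ` is injective.
-/

open Matrix

theorem Matrix.transpose_mulVec_injective_of_mulVec_surjective {R m n : Type*} [CommSemiring R]
    [Fintype m] [Fintype n] {A : Matrix m n R} (hA : Function.Surjective A.mulVec) :
    Function.Injective Aᵀ.mulVec := by
  classical
  intro v w hvw
  funext i
  obtain ⟨x, hx⟩ := hA (Pi.single i 1)
  calc v i = v ⬝ᵥ (A *ᵥ x) := by simp [hx]
    _ = (Aᵀ *ᵥ v) ⬝ᵥ x := by rw [dotProduct_mulVec, mulVec_transpose]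
    _ = (Aᵀ *ᵥ w) ⬝ᵥ x := by rw [hvw]
    _ = w i := by rw [mulVec_transpose, ← dotProduct_mulVec, hx]; simp

theorem LinearMap.bijective_coprod_of_range_eq_ker {R P M E N : Type*} [Semiring R]
    [AddCommGroup P] [AddCommGroup M] [AddCommGroup E] [AddCommGroup N]
    [Module R P] [Module R M] [Module R E] [Module R N]
    {S : P →ₗ[R] E} {T : M →ₗ[R] E} {L : E →ₗ[R] N} (hS : Function.Injective S)
    (hSL : range S = ker L) (hLT : Function.Bijective (L ∘ₗ T)) :
    Function.Bijective (S.coprod T) := by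
  have hLS : ∀ f, L (S f) = 0 := fun f => by
    rw [← mem_ker, ← hSL]; exact mem_range_self S f
  constructor
  · rw [injective_iff_map_eq_zero]
    rintro ⟨f, v⟩ h
    rw [coprod_apply] at h
    have hv : v = 0 := (injective_iff_map_eq_zero _).1 hLT.1 v <| by
      simpa [hLS] using congrArg L h
    subst hv
    rw [map_zero, add_zero] at h
    rw [(injective_iff_map_eq_zero S).1 hS f h, Prod.mk_zero_zero]
  · intro x
    obtain ⟨v, hv⟩ := hLT.2 (L x)
    obtain ⟨f, hf⟩ : x - T v ∈ range S := by
      rw [hSL, mem_ker, map_sub, ← comp_apply, hv, sub_self]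
    exact ⟨(f, v), by rw [coprod_apply, hf, sub_add_cancel]⟩

theorem stmt_5_general {n m p : Type*} [Fintype n] [Fintype m] [Fintype p]
    [DecidableEq m]
    (Q : Matrix n n ℝ) (A : Matrix m n ℝ) (B : Matrix p n ℝ)
    (hQ : Q.PosDef)
    (hA : Function.Surjective A.mulVec)
    (hBsurj : Function.Surjective B.mulVec)
    (hB : LinearMap.range Bᵀ.mulVecLin = LinearMap.ker A.mulVecLin) :
    ∀ μ : n → ℝ, ∃! pair : (p → ℝ) × (m → ℝ),
      μ = Bᵀ *ᵥ pair.1 + (Q * Aᵀ) *ᵥ pair.2 := by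
  intro μ
  have hSchur : (A * Q * Aᵀ).PosDef := by
    simpa using hQ.conjTranspose_mul_mul_same (transpose_mulVec_injective_of_mulVec_surjective hA)
  have hLT : Function.Bijective (A.mulVecLin ∘ₗ (Q * Aᵀ).mulVecLin) := by
    rw [← mulVecLin_mul, ← Matrix.mul_assoc]
    exact ⟨mulVec_injective_iff_isUnit.2 hSchur.isUnit,
      mulVec_surjective_iff_isUnit.2 hSchur.isUnit⟩
  simpa only [LinearMap.coprod_apply, mulVecLin_apply, eq_comm] using
    (LinearMap.bijective_coprod_of_range_eq_ker
      (transpose_mulVec_injective_of_mulVec_surjective hBsurj) hB hLT).existsUnique μ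

/-- If `Q` is symmetric positive definite, `A` has full row rank, `B` has
full row rank, and `Range(Bᵀ) = Ker(A)`, then every `μ` decomposes uniquely as
`μ = Bᵀ f_B + Q Aᵀ v_A`. -/
theorem stmt_5 {n m p : Type*} [Fintype n] [Fintype m] [Fintype p]
    [DecidableEq n] [DecidableEq m] [DecidableEq p]
    (Q : Matrix n n ℝ) (A : Matrix m n ℝ) (B : Matrix p n ℝ)
    (hQsym : Qᵀ = Q) (hQ : Q.PosDef)
    (hA : Function.Surjective A.mulVec)
    (hBsurj : Function.Surjective B.mulVec)
    (hB : LinearMap.range Bᵀ.mulVecLin = LinearMap.ker A.mulVecLin) :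
    ∀ μ : n → ℝ, ∃! pair : (p → ℝ) × (m → ℝ),
      μ = Bᵀ *ᵥ pair.1 + (Q * Aᵀ) *ᵥ pair.2 :=
  stmt_5_general Q A B hQ hA hBsurj hB
end

section
/- Let S be an n×n real symmetric positive definite matrix and G an n×m real matrix of full column rank, and set P := I − G (Gᵀ S G)⁻¹ Gᵀ S. Then the inverse of S splits as S⁻¹ = P S⁻¹ Pᵀ + (I − P) S⁻¹ (I − P)ᵀ. -/
/-!
`Q := I - P = G (Gᵀ S G)⁻¹ Gᵀ S` is the `S`-orthogonal projector onto the range of `G`: with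
`K := G (Gᵀ S G)⁻¹ Gᵀ` one has `Q S⁻¹ = S⁻¹ Qᵀ = Q S⁻¹ Qᵀ = K`. For any `M`, `Q` with
`Q M = M Qᵀ = Q M Qᵀ` the cross terms in `(I - Q) M (I - Q)ᵀ` cancel against `Q M Qᵀ`,
leaving `M`.
-/

open Matrix

namespace Matrix

variable {n m R : Type*} [Fintype n] [Fintype m] [DecidableEq n] [DecidableEq m] [CommRing R]

theorem conj_one_sub_add_conj_eq_self {M Q : Matrix n n R}
    (hQM : Q * M = Q * M * Qᵀ) (hMQ : M * Qᵀ = Q * M * Qᵀ) :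
    (1 - Q) * M * (1 - Q)ᵀ + Q * M * Qᵀ = M := by
  simp only [transpose_sub, transpose_one, Matrix.sub_mul, Matrix.mul_sub, Matrix.one_mul,
    Matrix.mul_one]
  rw [hMQ, ← hQM]
  abel

theorem conj_one_sub_add_conj_projector_eq_inv {S : Matrix n n R} {G : Matrix n m R}
    (hSsym : Sᵀ = S) (hS : IsUnit S.det) (hB : IsUnit (Gᵀ * S * G).det) :
    let Q : Matrix n n R := G * (Gᵀ * S * G)⁻¹ * Gᵀ * S
    (1 - Q) * S⁻¹ * (1 - Q)ᵀ + Q * S⁻¹ * Qᵀ = S⁻¹ := by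
  intro Q
  set B := Gᵀ * S * G with hB_def
  set K := G * B⁻¹ * Gᵀ
  have hK_symm : Kᵀ = K := by
    have hB_symm : Bᵀ = B := by simp [B, transpose_mul, hSsym, Matrix.mul_assoc]
    simp [K, transpose_mul, transpose_nonsing_inv, hB_symm, Matrix.mul_assoc]
  have hQ : Q = K * S := rfl
  have hQ_mul : Q * S⁻¹ = K := by
    rw [hQ, Matrix.mul_assoc, mul_nonsing_inv S hS, Matrix.mul_one]
  have hQ_transpose : Qᵀ = S * K := by
    rw [hQ, transpose_mul, hSsym, hK_symm]
  have hQ_conj : Q * S⁻¹ * Qᵀ = K := by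
    calc Q * S⁻¹ * Qᵀ = G * (B⁻¹ * (Gᵀ * S * G)) * (B⁻¹ * Gᵀ) := by
          rw [hQ_mul, hQ_transpose]; simp only [K, Matrix.mul_assoc]
      _ = K := by rw [← hB_def, nonsing_inv_mul B hB, Matrix.mul_one, ← Matrix.mul_assoc]
  refine conj_one_sub_add_conj_eq_self (hQ_mul.trans hQ_conj.symm) ?_
  rw [hQ_conj, hQ_transpose, ← Matrix.mul_assoc, nonsing_inv_mul S hS, Matrix.one_mul]

end Matrix

/-- For `S` symmetric positive definite and `G` injective, with
`P := I − G (Gᵀ S G)⁻¹ Gᵀ S`, the inverse of `S` splits as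
`S⁻¹ = P S⁻¹ Pᵀ + (I − P) S⁻¹ (I − P)ᵀ`. -/
theorem stmt_9 {n m : Type*} [Fintype n] [Fintype m] [DecidableEq n] [DecidableEq m]
    (S : Matrix n n ℝ) (G : Matrix n m ℝ)
    (hSsym : Sᵀ = S) (hS : S.PosDef)
    (hG : Function.Injective G.mulVec) :
    let P : Matrix n n ℝ := 1 - G * (Gᵀ * S * G)⁻¹ * Gᵀ * S
    S⁻¹ = P * S⁻¹ * Pᵀ + (1 - P) * S⁻¹ * (1 - P)ᵀ := by
  intro P
  have hB : (Gᵀ * S * G).PosDef := by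
    simpa only [conjTranspose_eq_transpose_of_trivial] using hS.conjTranspose_mul_mul_same hG
  rw [sub_sub_cancel]
  exact (conj_one_sub_add_conj_projector_eq_inv hSsym ((isUnit_iff_isUnit_det S).mp hS.isUnit)
    ((isUnit_iff_isUnit_det _).mp hB.isUnit)).symm
end

section
/- Let S be an n×n real symmetric positive definite matrix and G an n×m real matrix of full column rank, and set P := I − G (Gᵀ S G)⁻¹ Gᵀ S. Then P S⁻¹ = S⁻¹ Pᵀ = P S⁻¹ Pᵀ = S⁻¹ − G (Gᵀ S G)⁻¹ Gᵀ; in particular P S⁻¹ is symmetric. -/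
/-! With `Q := G (Gᵀ S G)⁻¹ Gᵀ`, the matrix `P = 1 - Q S` is idempotent and `P S⁻¹ = S⁻¹ - Q` is
symmetric, so `S⁻¹ Pᵀ = P S⁻¹` and `P S⁻¹ Pᵀ = P (P S⁻¹) = P S⁻¹`. -/

open Matrix

namespace Matrix

variable {n m R : Type*} [CommRing R]

theorem isSymm_transpose_mul_mul [Fintype n] (G : Matrix n m R) {S : Matrix n n R} (hS : S.IsSymm) :
    (Gᵀ * S * G).IsSymm := by
  simp only [IsSymm, transpose_mul, transpose_transpose, hS.eq, Matrix.mul_assoc]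

theorem isSymm_mul_mul_transpose [Fintype m] (G : Matrix n m R) {A : Matrix m m R} (hA : A.IsSymm) :
    (G * A * Gᵀ).IsSymm := by
  simp only [IsSymm, transpose_mul, transpose_transpose, hA.eq, Matrix.mul_assoc]

theorem isIdempotentElem_mul_inv_mul_mul [Fintype n] [Fintype m] [DecidableEq m]
    (G : Matrix n m R) (H : Matrix m n R) {S : Matrix n n R} (hHSG : IsUnit (H * S * G).det) :
    IsIdempotentElem (G * (H * S * G)⁻¹ * H * S) := by
  calc G * (H * S * G)⁻¹ * H * S * (G * (H * S * G)⁻¹ * H * S)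
      = G * ((H * S * G)⁻¹ * (H * S * G)) * (H * S * G)⁻¹ * H * S := by
        simp only [Matrix.mul_assoc]
    _ = G * (H * S * G)⁻¹ * H * S := by rw [nonsing_inv_mul _ hHSG, Matrix.mul_one]

end Matrix

theorem stmt_11_general {n m : Type*} [Fintype n] [Fintype m] [DecidableEq n] [DecidableEq m]
    (S : Matrix n n ℝ) (G : Matrix n m ℝ)
    (hS : S.PosDef)
    (hG : Function.Injective G.mulVec) :
    let P : Matrix n n ℝ := 1 - G * (Gᵀ * S * G)⁻¹ * Gᵀ * S
    P * S⁻¹ = S⁻¹ * Pᵀ ∧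
    P * S⁻¹ = P * S⁻¹ * Pᵀ ∧
    P * S⁻¹ = S⁻¹ - G * (Gᵀ * S * G)⁻¹ * Gᵀ ∧
    (P * S⁻¹)ᵀ = P * S⁻¹ := by
  intro P
  have hSsymm : S.IsSymm := hS.isHermitian
  have hSdet : IsUnit S.det := (isUnit_iff_isUnit_det S).1 hS.isUnit
  have hGSGdet : IsUnit (Gᵀ * S * G).det := by
    have := (hS.conjTranspose_mul_mul_same hG).isUnit
    rwa [conjTranspose_eq_transpose_of_trivial, isUnit_iff_isUnit_det] at this
  have hP : IsIdempotentElem P := (isIdempotentElem_mul_inv_mul_mul G Gᵀ hGSGdet).one_sub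
  have hPS : P * S⁻¹ = S⁻¹ - G * (Gᵀ * S * G)⁻¹ * Gᵀ := by
    rw [Matrix.sub_mul, Matrix.one_mul, Matrix.mul_assoc _ S, mul_nonsing_inv S hSdet,
      Matrix.mul_one]
  have hPSsymm : (P * S⁻¹)ᵀ = P * S⁻¹ := by
    rw [hPS]
    exact hSsymm.inv.sub (isSymm_mul_mul_transpose G (isSymm_transpose_mul_mul G hSsymm).inv)
  have hSP : S⁻¹ * Pᵀ = P * S⁻¹ := by
    rw [← hPSsymm, transpose_mul, hSsymm.inv.eq]
  refine ⟨hSP.symm, ?_, hPS, hPSsymm⟩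
  rw [Matrix.mul_assoc, hSP, ← Matrix.mul_assoc, hP.eq]

/-- For `S` symmetric positive definite and `G` injective, with
`P := I − G (Gᵀ S G)⁻¹ Gᵀ S`, we have
`P S⁻¹ = S⁻¹ Pᵀ = P S⁻¹ Pᵀ = S⁻¹ − G (Gᵀ S G)⁻¹ Gᵀ`; in particular `P S⁻¹` is
symmetric. -/
theorem stmt_11 {n m : Type*} [Fintype n] [Fintype m] [DecidableEq n] [DecidableEq m]
    (S : Matrix n n ℝ) (G : Matrix n m ℝ)
    (hSsym : Sᵀ = S) (hS : S.PosDef)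
    (hG : Function.Injective G.mulVec) :
    let P : Matrix n n ℝ := 1 - G * (Gᵀ * S * G)⁻¹ * Gᵀ * S
    P * S⁻¹ = S⁻¹ * Pᵀ ∧
    P * S⁻¹ = P * S⁻¹ * Pᵀ ∧
    P * S⁻¹ = S⁻¹ - G * (Gᵀ * S * G)⁻¹ * Gᵀ ∧
    (P * S⁻¹)ᵀ = P * S⁻¹ :=
  stmt_11_general S G hS hG
end

section
/- Let M and N be n×n real diagonal matrices with M and M − N invertible, let Aʲ be an n×p real matrix with Aʲᵀ Aʲ = I and Aʲ Aʲᵀ diagonal, and let X be any n×q real matrix. Define D̃ʲ := Aʲᵀ M (M − N)⁻¹ Aʲ. Then Aʲᵀ (M − N)⁻¹ X = D̃ʲ Aʲᵀ M⁻¹ X. In particular, taking X = A⁽ˢ⁾ Δ⁽ˢ⁾, the modified scaled assembly operators Â⁽ˢ⁾ := (M − N)⁻¹ A⁽ˢ⁾ Δ⁽ˢ⁾ and the classical scaled assembly operators Ã⁽ˢ⁾ := M⁻¹ A⁽ˢ⁾ Δ⁽ˢ⁾ satisfy Aʲᵀ Â⁽ˢ⁾ = D̃ʲ Aʲᵀ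 Ã⁽ˢ⁾. -/
open Matrix

lemma diag_commute {n : Type*} [Fintype n] [DecidableEq n]
    {A B : Matrix n n ℝ} (hA : A.IsDiag) (hB : B.IsDiag) : A * B = B * A := by
  ext i j
  rw [Matrix.mul_apply, Matrix.mul_apply]
  apply Finset.sum_congr rfl
  intro k _
  rcases eq_or_ne i k with rfl | hik
  · rcases eq_or_ne i j with rfl | hij
    · ring
    · rw [hB hij, hA hij]; ring
  · rw [hA hik, hB hik]; ring

lemma commute_inv {n : Type*} [Fintype n] [DecidableEq n]
    {A B : Matrix n n ℝ} (hB : IsUnit B) (h : A * B = B * A) : A * B⁻¹ = B⁻¹ * A := by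
  have hdet : IsUnit B.det := (Matrix.isUnit_iff_isUnit_det B).mp hB
  have key : B * (A * B⁻¹) = A := by
    rw [← Matrix.mul_assoc, ← h, Matrix.mul_assoc, Matrix.mul_nonsing_inv B hdet, mul_one]
  calc A * B⁻¹ = B⁻¹ * (B * (A * B⁻¹)) := by
        rw [← Matrix.mul_assoc, Matrix.nonsing_inv_mul B hdet, one_mul]
    _ = B⁻¹ * A := by rw [key]

/-- With `M`, `N` diagonal, `M` and `M − N` invertible, and `Aʲ`
satisfying `Aʲᵀ Aʲ = I` and `Aʲ Aʲᵀ` diagonal, setting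
`D̃ʲ := Aʲᵀ M (M − N)⁻¹ Aʲ`, one has `Aʲᵀ (M − N)⁻¹ X = D̃ʲ Aʲᵀ M⁻¹ X` for every
matrix `X`; in particular modified and classical scaled assembly operators are
related by `Aʲᵀ Â⁽ˢ⁾ = D̃ʲ Aʲᵀ Ã⁽ˢ⁾`. -/
theorem stmt_14 {n p q : Type*} [Fintype n] [Fintype p] [Fintype q]
    [DecidableEq n] [DecidableEq p] [DecidableEq q]
    (M N : Matrix n n ℝ) (Aj : Matrix n p ℝ) (X : Matrix n q ℝ)
    (hMdiag : M.IsDiag) (hNdiag : N.IsDiag)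
    (hM : IsUnit M) (hMN : IsUnit (M - N))
    (hAj₁ : Ajᵀ * Aj = 1) (hAj₂ : (Aj * Ajᵀ).IsDiag) :
    Ajᵀ * (M - N)⁻¹ * X = (Ajᵀ * M * (M - N)⁻¹ * Aj) * (Ajᵀ * M⁻¹ * X) := by
  have hMNdiag : (M - N).IsDiag := hMdiag.sub hNdiag
  have hdetM : IsUnit M.det := (Matrix.isUnit_iff_isUnit_det M).mp hM
  have hPMN : (Aj * Ajᵀ) * (M - N)⁻¹ = (M - N)⁻¹ * (Aj * Ajᵀ) :=
    commute_inv hMN (diag_commute hAj₂ hMNdiag)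
  have hPM : (Aj * Ajᵀ) * M⁻¹ = M⁻¹ * (Aj * Ajᵀ) :=
    commute_inv hM (diag_commute hAj₂ hMdiag)
  have hMMN : M * (M - N)⁻¹ = (M - N)⁻¹ * M :=
    commute_inv hMN (diag_commute hMdiag hMNdiag)
  -- generalized (right-multiplied) versions
  have hPM' : Aj * (Ajᵀ * (M⁻¹ * X)) = M⁻¹ * (Aj * (Ajᵀ * X)) := by
    have := congrArg (· * X) hPM
    simpa [Matrix.mul_assoc] using this
  have hMMN' : ∀ Y : Matrix n q ℝ, M * ((M - N)⁻¹ * Y) = (M - N)⁻¹ * (M * Y) := by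
    intro Y
    have := congrArg (· * Y) hMMN
    simpa [Matrix.mul_assoc] using this
  have hPMN' : (M - N)⁻¹ * (Aj * (Ajᵀ * X)) = Aj * (Ajᵀ * ((M - N)⁻¹ * X)) := by
    have := congrArg (· * X) hPMN.symm
    simpa [Matrix.mul_assoc] using this
  symm
  calc (Ajᵀ * M * (M - N)⁻¹ * Aj) * (Ajᵀ * M⁻¹ * X)
      = Ajᵀ * (M * ((M - N)⁻¹ * (Aj * (Ajᵀ * (M⁻¹ * X))))) := by
        simp only [Matrix.mul_assoc]
    _ = Ajᵀ * (M * ((M - N)⁻¹ * (M⁻¹ * (Aj * (Ajᵀ * X))))) := by rw [hPM']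
    _ = Ajᵀ * ((M - N)⁻¹ * (M * (M⁻¹ * (Aj * (Ajᵀ * X))))) := by rw [hMMN']
    _ = Ajᵀ * ((M - N)⁻¹ * (Aj * (Ajᵀ * X))) := by
        rw [← Matrix.mul_assoc M, Matrix.mul_nonsing_inv M hdetM, Matrix.one_mul]
    _ = Ajᵀ * (Aj * (Ajᵀ * ((M - N)⁻¹ * X))) := by rw [hPMN']
    _ = Ajᵀ * (M - N)⁻¹ * X := by
        rw [← Matrix.mul_assoc, hAj₁, Matrix.one_mul, ← Matrix.mul_assoc]
end

section
/- Let M be an n×n real symmetric invertible matrix, Δʲ a p×p real symmetric matrix, and Aʲ an n×p real matrix. Set N := Aʲ Δʲ Aʲᵀ and Ãʲ := M⁻¹ Aʲ Δʲ, and assume M − N is invertible. Then I − Aʲ Ãʲᵀ is invertible with (I − Aʲ Ãʲᵀ)⁻¹ = M (M − N)⁻¹, and consequently the rescaling matrix D̃ʲ := Aʲᵀ M (M − N)⁻¹ Aʲ can be extracted from the classical scaled assembly operator alone: D̃ʲ = Aʲᵀ (I − Aʲ Ãʲᵀ)⁻¹ Aʲ. -/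
open Matrix

/-- With `M` symmetric invertible, `Δʲ` symmetric, `N := Aʲ Δʲ Aʲᵀ`,
`Ãʲ := M⁻¹ Aʲ Δʲ`, and `M − N` invertible, the matrix `I − Aʲ Ãʲᵀ` is invertible
with inverse `M (M − N)⁻¹`, and `D̃ʲ := Aʲᵀ M (M − N)⁻¹ Aʲ` can be extracted from
the classical scaled assembly operator: `D̃ʲ = Aʲᵀ (I − Aʲ Ãʲᵀ)⁻¹ Aʲ`. -/
theorem stmt_15 {n p : Type*} [Fintype n] [Fintype p] [DecidableEq n] [DecidableEq p]
    (M : Matrix n n ℝ) (Δj : Matrix p p ℝ) (Aj : Matrix n p ℝ)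
    (hMsym : Mᵀ = M) (hM : IsUnit M)
    (hΔsym : Δjᵀ = Δj)
    (hMN : IsUnit (M - Aj * Δj * Ajᵀ)) :
    IsUnit (1 - Aj * (M⁻¹ * Aj * Δj)ᵀ) ∧
    (1 - Aj * (M⁻¹ * Aj * Δj)ᵀ)⁻¹ = M * (M - Aj * Δj * Ajᵀ)⁻¹ ∧
    Ajᵀ * M * (M - Aj * Δj * Ajᵀ)⁻¹ * Aj
      = Ajᵀ * (1 - Aj * (M⁻¹ * Aj * Δj)ᵀ)⁻¹ * Aj := by
  have key : 1 - Aj * (M⁻¹ * Aj * Δj)ᵀ = (M - Aj * Δj * Ajᵀ) * M⁻¹ := by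
    have ht : (M⁻¹ * Aj * Δj)ᵀ = Δj * Ajᵀ * M⁻¹ := by
      simp [Matrix.transpose_mul, Matrix.transpose_nonsing_inv, hMsym, hΔsym, Matrix.mul_assoc]
    rw [ht, sub_mul, Matrix.mul_nonsing_inv M (Matrix.isUnit_iff_isUnit_det M |>.1 hM)]
    simp [Matrix.mul_assoc]
  have hMinv : IsUnit M⁻¹ := (Matrix.isUnit_nonsing_inv_iff).2 hM
  have hU : IsUnit (1 - Aj * (M⁻¹ * Aj * Δj)ᵀ) := by rw [key]; exact hMN.mul hMinv
  have hInv : (1 - Aj * (M⁻¹ * Aj * Δj)ᵀ)⁻¹ = M * (M - Aj * Δj * Ajᵀ)⁻¹ := by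
    rw [key, Matrix.mul_inv_rev, Matrix.nonsing_inv_nonsing_inv M (Matrix.isUnit_iff_isUnit_det M |>.1 hM)]
  exact ⟨hU, hInv, by rw [hInv, Matrix.mul_assoc Ajᵀ M]⟩
end

section
/- Let s range over a finite index set of subdomains, let S⁽ˢ⁾ be real symmetric matrices and A⁽ˢ⁾ real assembly matrices, fix an index j, and assume that the assembled complement matrix S_Ā := Σ_{s ≠ j} A⁽ˢ⁾ S⁽ˢ⁾ A⁽ˢ⁾ᵀ is invertible and that A⁽ʲ⁾ᵀ S_Ā⁻¹ A⁽ʲ⁾ is invertible. Let v solve the globally assembled condensed problem (A⁽ʲ⁾ S⁽ʲ⁾ A⁽ʲ⁾ᵀ + S_Ā) v = f. Then the restriction u := A⁽ʲ⁾ᵀ v of the global solution to the interface of subdomain j satisfies the local Robin equation S⁽ʲ⁾ u + S̄ u = S̄ A⁽ʲ⁾ᵀ S_Ā⁻¹ f, where S̄ := (A⁽ʲ⁾ᵀ S_Ā⁻¹ A⁽ʲ⁾)⁻¹ is the Dirichlet-to-Neumann (Schur) operator of the complement of subdomain j; i.e., with impedance equal to the Schur complement of the remainder of the structure, the local mixed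 problem is solved exactly by the global solution. -/
open Matrix

/-- With local symmetric Schur complements `S⁽ˢ⁾` and assembly
operators `A⁽ˢ⁾`, a fixed subdomain `j`, the assembled complement matrix
`S_Ā := Σ_{s ≠ j} A⁽ˢ⁾ S⁽ˢ⁾ A⁽ˢ⁾ᵀ` invertible and `A⁽ʲ⁾ᵀ S_Ā⁻¹ A⁽ʲ⁾` invertible:
if `v` solves the globally assembled condensed problem
`(A⁽ʲ⁾ S⁽ʲ⁾ A⁽ʲ⁾ᵀ + S_Ā) v = f`, then `u := A⁽ʲ⁾ᵀ v` satisfies the local Robin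
equation `S⁽ʲ⁾ u + S̄ u = S̄ A⁽ʲ⁾ᵀ S_Ā⁻¹ f`, where
`S̄ := (A⁽ʲ⁾ᵀ S_Ā⁻¹ A⁽ʲ⁾)⁻¹`. -/
theorem stmt_16 {σ : Type*} [Fintype σ] [DecidableEq σ]
    {n : Type*} [Fintype n] [DecidableEq n]
    {p : σ → Type*} [∀ s, Fintype (p s)] [∀ s, DecidableEq (p s)]
    (S : ∀ s, Matrix (p s) (p s) ℝ) (A : ∀ s, Matrix n (p s) ℝ)
    (hSsym : ∀ s, (S s)ᵀ = S s)
    (j : σ)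
    (hSA : IsUnit (∑ s ∈ Finset.univ.erase j, A s * S s * (A s)ᵀ))
    (hSbar : IsUnit ((A j)ᵀ * (∑ s ∈ Finset.univ.erase j, A s * S s * (A s)ᵀ)⁻¹ * A j))
    (v f : n → ℝ)
    (hv : (A j * S j * (A j)ᵀ + ∑ s ∈ Finset.univ.erase j, A s * S s * (A s)ᵀ) *ᵥ v = f) :
    S j *ᵥ ((A j)ᵀ *ᵥ v)
      + ((A j)ᵀ * (∑ s ∈ Finset.univ.erase j, A s * S s * (A s)ᵀ)⁻¹ * A j)⁻¹
          *ᵥ ((A j)ᵀ *ᵥ v)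
      = ((A j)ᵀ * (∑ s ∈ Finset.univ.erase j, A s * S s * (A s)ᵀ)⁻¹ * A j)⁻¹
          *ᵥ ((A j)ᵀ *ᵥ ((∑ s ∈ Finset.univ.erase j, A s * S s * (A s)ᵀ)⁻¹ *ᵥ f)) := by
  set M := ∑ s ∈ Finset.univ.erase j, A s * S s * (A s)ᵀ with hM
  set C := (A j)ᵀ * M⁻¹ * A j with hC
  have hMinv : M⁻¹ * M = 1 := nonsing_inv_mul M ((Matrix.isUnit_iff_isUnit_det _).mp hSA)
  have hCinv : C⁻¹ * C = 1 := nonsing_inv_mul C ((Matrix.isUnit_iff_isUnit_det _).mp hSbar)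
  have h1 : M⁻¹ *ᵥ f = M⁻¹ *ᵥ ((A j * S j * (A j)ᵀ) *ᵥ v) + v := by
    rw [← hv, add_mulVec, mulVec_add]
    simp only [mulVec_mulVec, hMinv, one_mulVec]
  have h2 : (A j)ᵀ *ᵥ (M⁻¹ *ᵥ f) = C *ᵥ (S j *ᵥ ((A j)ᵀ *ᵥ v)) + (A j)ᵀ *ᵥ v := by
    rw [h1, mulVec_add, hC]
    congr 1
    simp only [mulVec_mulVec, ← Matrix.mul_assoc]
  calc S j *ᵥ ((A j)ᵀ *ᵥ v) + C⁻¹ *ᵥ ((A j)ᵀ *ᵥ v)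
      = C⁻¹ *ᵥ (C *ᵥ (S j *ᵥ ((A j)ᵀ *ᵥ v)) + (A j)ᵀ *ᵥ v) := by
        rw [mulVec_add]
        simp only [mulVec_mulVec, ← Matrix.mul_assoc, hCinv, Matrix.one_mul]
    _ = C⁻¹ *ᵥ ((A j)ᵀ *ᵥ (M⁻¹ *ᵥ f)) := by rw [h2]
end
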